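/- Let Q > 2 and let p satisfy 2Q/(Q+2) < p ≤ Q/2. Set 2_* = 2Q/(Q+2) and p^* = Qp/(Q−p). Then there exists a constant C > 0, depending only on p and Q, such that for every nonincreasing measurable function g : (0,∞) → [0,∞), ( ∫_0^∞ t^{−p^*/2} ( ∫_0^t g(s)^{2_*} ds )^{p^*/2_*} dt )^{1/p^*} ≤ C ( ∫_0^∞ g(t)^p dt )^{1/p}. -/

import Mathlib

open MeasureTheory Set
open scoped ENNReal

lemma lint_Ioc_rpow {c t : ℝ} (hc : -1 < c) (ht : 0 < t) :
    ∫⁻ s in Ioc (0:ℝ) t, ENNReal.ofReal (s ^ c) = ENNReal.ofReal (t ^ (c+1) / (c+1)) := by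
  have hint : IntegrableOn (fun s : ℝ => s ^ c) (Ioc 0 t) := by
    have := (intervalIntegral.intervalIntegrable_rpow' (a := 0) (b := t) hc)
    simpa [intervalIntegrable_iff_integrableOn_Ioc_of_le ht.le] using this
  rw [← ofReal_integral_eq_lintegral_ofReal hint]
  · congr 1
    rw [← intervalIntegral.integral_of_le ht.le, integral_rpow (Or.inl hc)]
    rw [Real.zero_rpow (by linarith)]
    ring
  · filter_upwards [ae_restrict_mem measurableSet_Ioc] with s hs
    exact Real.rpow_nonneg hs.1.le c

lemma lint_Ici_rpow {c s : ℝ} (hc : c < -1) (hs : 0 < s) :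
    ∫⁻ t in Ici s, ENNReal.ofReal (t ^ c) = ENNReal.ofReal (s ^ (c+1) * (-(c+1))⁻¹) := by
  rw [← MeasureTheory.restrict_Ioi_eq_restrict_Ici]
  rw [← ofReal_integral_eq_lintegral_ofReal (integrableOn_Ioi_rpow_of_lt hc hs)]
  · rw [integral_Ioi_rpow_of_lt hc hs]
    congr 1
    rw [inv_neg, mul_neg, ← div_eq_mul_inv, neg_div]
  · filter_upwards [ae_restrict_mem measurableSet_Ioi] with x hx
    exact Real.rpow_nonneg (le_of_lt (lt_trans hs hx)) c

lemma swap_aux (w h : ℝ → ℝ≥0∞) (hw : Measurable w) (hh : Measurable h) :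
    ∫⁻ t in Ioi (0:ℝ), w t * ∫⁻ s in Ioc (0:ℝ) t, h s
      = ∫⁻ s in Ioi (0:ℝ), h s * ∫⁻ t in Ici s, w t := by
  have hF : Measurable (Function.uncurry fun t s : ℝ => if s ≤ t then w t * h s else 0) := by
    apply Measurable.ite
    · exact measurableSet_le measurable_snd measurable_fst
    · exact (hw.comp measurable_fst).mul (hh.comp measurable_snd)
    · exact measurable_const
  have lhs_eq : ∀ t : ℝ,
      w t * ∫⁻ s in Ioc (0:ℝ) t, h s = ∫⁻ s in Ioi (0:ℝ), if s ≤ t then w t * h s else 0 := by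
    intro t
    have : (fun s : ℝ => if s ≤ t then w t * h s else 0)
        = (Iic t).indicator (fun s => w t * h s) := by
      ext s; simp [Set.indicator_apply, Set.mem_Iic]
    rw [this, lintegral_indicator measurableSet_Iic,
      Measure.restrict_restrict measurableSet_Iic, Iic_inter_Ioi, lintegral_const_mul _ hh]
  have rhs_eq : ∀ s ∈ Ioi (0:ℝ),
      h s * ∫⁻ t in Ici s, w t = ∫⁻ t in Ioi (0:ℝ), if s ≤ t then w t * h s else 0 := by
    intro s hs
    have : (fun t : ℝ => if s ≤ t then w t * h s else 0)
        = (Ici s).indicator (fun t => w t * h s) := by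
      ext t; simp [Set.indicator_apply, Set.mem_Ici]
    rw [this, lintegral_indicator measurableSet_Ici,
      Measure.restrict_restrict measurableSet_Ici,
      Set.inter_eq_left.mpr (Set.Ici_subset_Ioi.mpr hs),
      lintegral_mul_const _ hw, mul_comm]
  calc ∫⁻ t in Ioi (0:ℝ), w t * ∫⁻ s in Ioc (0:ℝ) t, h s
      = ∫⁻ t in Ioi (0:ℝ), ∫⁻ s in Ioi (0:ℝ), if s ≤ t then w t * h s else 0 :=
        lintegral_congr fun t => lhs_eq t
    _ = ∫⁻ s in Ioi (0:ℝ), ∫⁻ t in Ioi (0:ℝ), if s ≤ t then w t * h s else 0 :=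
        lintegral_lintegral_swap hF.aemeasurable
    _ = ∫⁻ s in Ioi (0:ℝ), h s * ∫⁻ t in Ici s, w t := by
        refine setLIntegral_congr_fun measurableSet_Ioi (fun s hs => ?_)
        exact (rhs_eq s hs).symm

set_option maxHeartbeats 1000000 in
/-- Interpolation-type estimate for nonincreasing rearrangements: for `Q > 2` and
`2Q/(Q+2) < p ≤ Q/2`, with `2_* = 2Q/(Q+2)` and `p^* = Qp/(Q-p)`,
`(∫₀^∞ t^{-p^*/2} (∫₀^t g^{2_*})^{p^*/2_*} dt)^{1/p^*} ≤ C (∫₀^∞ g^p)^{1/p}`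
for every nonincreasing `g : (0,∞) → [0,∞)`. -/
theorem rearrangement_interpolation_low
    (Q p : ℝ) (hQ : 2 < Q) (hp1 : 2 * Q / (Q + 2) < p) (hp2 : p ≤ Q / 2) :
    ∃ C > (0 : ℝ), ∀ g : ℝ → ℝ, Measurable g → (∀ t, 0 < t → 0 ≤ g t) →
      (∀ s t, 0 < s → s ≤ t → g t ≤ g s) →
      (∫⁻ t in Ioi (0 : ℝ),
          ENNReal.ofReal (t ^ (-(Q * p / (Q - p)) / 2)) *
            (∫⁻ s in Ioc (0 : ℝ) t, ENNReal.ofReal (g s ^ (2 * Q / (Q + 2))))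
              ^ ((Q * p / (Q - p)) / (2 * Q / (Q + 2))))
          ^ (1 / (Q * p / (Q - p)))
        ≤ ENNReal.ofReal C *
          (∫⁻ t in Ioi (0 : ℝ), ENNReal.ofReal (g t ^ p)) ^ (1 / p) := by
  set q : ℝ := 2 * Q / (Q + 2) with hq_def
  set P : ℝ := Q * p / (Q - p) with hP_def
  -- numeric facts
  have hQ0 : (0:ℝ) < Q := by linarith
  have hQ2 : (0:ℝ) < Q + 2 := by linarith
  have hq_pos : 0 < q := div_pos (by linarith) hQ2
  have hq_lt2 : q < 2 := by
    rw [hq_def, div_lt_iff₀ hQ2]; linarith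
  have hp_pos : 0 < p := lt_trans hq_pos hp1
  have hpQ : p < Q := by linarith
  have hQp0 : 0 < Q - p := by linarith
  have hP_pos : 0 < P := div_pos (mul_pos hQ0 hp_pos) hQp0
  have hP2 : 2 < P := by
    rw [hP_def, lt_div_iff₀ hQp0]
    have h2q : 2 * Q < p * (Q + 2) := (div_lt_iff₀ hQ2).mp hp1
    nlinarith
  have hpP : p < P := by
    rw [hP_def, lt_div_iff₀ hQp0]; nlinarith
  have hqP : q < P := lt_trans hq_lt2 hP2
  set r : ℝ := P / q with hr_def
  have hr1 : 1 < r := (one_lt_div hq_pos).mpr hqP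
  have hr_pos : 0 < r := lt_trans zero_lt_one hr1
  have hqr : q * r = P := by rw [hr_def]; field_simp
  set r' : ℝ := r / (r - 1) with hr'_def
  have hconj : r.HolderConjugate r' := Real.HolderConjugate.conjExponent hr1
  have hr'_pos : 0 < r' := hconj.symm.pos
  have hr'r : r' * (r - 1) = r := by
    rw [hr'_def, div_mul_cancel₀ _ (sub_ne_zero.mpr hr1.ne')]
  -- choice of a
  have hqP2 : q / P < q / 2 := div_lt_div_of_pos_left hq_pos (by linarith) hP2
  set a : ℝ := 1 - (q/2 + q/P)/2 with ha_def
  have ha1 : 1 - q/2 < a := by rw [ha_def]; linarith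
  have ha2 : a < 1 - q/P := by rw [ha_def]; linarith
  have ha_pos : 0 < a := by
    have : q / 2 < 1 := by rw [div_lt_one (by norm_num)]; exact hq_lt2
    rw [ha_def]; linarith
  have hinv_r : 1/r = q/P := by rw [hr_def, one_div_div]
  have hinv_r' : 1/r' = 1 - q/P := by
    have h := hconj.inv_add_inv_eq_one
    have h2 : (r':ℝ)⁻¹ = 1 - r⁻¹ := by linarith
    rw [one_div, h2, inv_eq_one_div, hinv_r]
  have har' : a * r' < 1 := by
    have h3 : a < 1/r' := by rw [hinv_r']; exact ha2
    calc a * r' < (1/r') * r' := mul_lt_mul_of_pos_right h3 hr'_pos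
      _ = 1 := by field_simp
  have har'_pos : 0 < a * r' := mul_pos ha_pos hr'_pos
  have h1ar' : 0 < 1 - a * r' := by linarith
  set β : ℝ := r - 1 - a*r - P/2 with hβ_def
  have hβ_lt : β < -1 := by
    have h1 : r * (1 - a) < r * (q/2) := mul_lt_mul_of_pos_left (by linarith) hr_pos
    have h2 : r * (q/2) = P/2 := by rw [← hqr]; ring
    rw [hβ_def]; nlinarith
  set m : ℝ := (P - p)/p with hm_def
  have hm_pos : 0 < m := div_pos (by linarith) hp_pos
  have hpm : p * m = P - p := by rw [hm_def]; field_simp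
  have hPQ : r - P/2 = m := by
    rw [hr_def, hq_def, hm_def, hP_def]
    field_simp
    ring
  have hexp : a*r + (β+1) = m := by rw [hβ_def]; linarith [hPQ]
  have h1r'r : 1/r' * r = r - 1 := by
    rw [hinv_r', sub_mul, one_mul, div_mul_eq_mul_div, hqr, div_self hP_pos.ne']
  have hur : (1 - a*r') * (r - 1) = r - 1 - a*r := by
    linear_combination (-a) * hr'r
  -- constants
  set c₁ : ℝ := (1 - a*r')⁻¹ ^ (r - 1) with hc₁_def
  set c₂ : ℝ := (-(β+1))⁻¹ with hc₂_def
  have hc₁_pos : 0 < c₁ := Real.rpow_pos_of_pos (inv_pos.mpr h1ar') _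
  have hc₂_pos : 0 < c₂ := inv_pos.mpr (by linarith)
  refine ⟨(c₁ * c₂) ^ (1/P), Real.rpow_pos_of_pos (mul_pos hc₁_pos hc₂_pos) _, ?_⟩
  intro g hg_meas hg_nonneg hg_mono
  set I : ℝ≥0∞ := ∫⁻ t in Ioi (0:ℝ), ENNReal.ofReal (g t ^ p) with hI_def
  -- pointwise bound from monotonicity
  have hpt : ∀ s : ℝ, 0 < s → ENNReal.ofReal (g s ^ p) * ENNReal.ofReal s ≤ I := by
    intro s hs
    have h1 : ENNReal.ofReal (g s ^ p) * ENNReal.ofReal s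
        = ∫⁻ _ in Ioc (0:ℝ) s, ENNReal.ofReal (g s ^ p) := by
      rw [setLIntegral_const, Real.volume_Ioc, sub_zero]
    rw [h1]
    calc ∫⁻ _ in Ioc (0:ℝ) s, ENNReal.ofReal (g s ^ p)
        ≤ ∫⁻ u in Ioc (0:ℝ) s, ENNReal.ofReal (g u ^ p) := by
          refine setLIntegral_mono' measurableSet_Ioc fun u hu => ?_
          exact ENNReal.ofReal_le_ofReal
            (Real.rpow_le_rpow (hg_nonneg s hs) (hg_mono u s hu.1 hu.2) hp_pos.le)
      _ ≤ I := lintegral_mono_set Ioc_subset_Ioi_self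
  by_cases hI0 : I = 0
  · -- g vanishes on (0, ∞)
    have hg0 : ∀ s : ℝ, 0 < s → g s = 0 := by
      intro s hs
      by_contra hne
      have hgs : 0 < g s := lt_of_le_of_ne (hg_nonneg s hs) (Ne.symm hne)
      have h1 : 0 < g s ^ p := Real.rpow_pos_of_pos hgs p
      have h2 : ENNReal.ofReal (g s ^ p) * ENNReal.ofReal s = 0 :=
        le_antisymm (hI0 ▸ hpt s hs) bot_le
      rcases mul_eq_zero.mp h2 with h | h
      · exact absurd (ENNReal.ofReal_eq_zero.mp h) (not_le.mpr h1)
      · exact absurd (ENNReal.ofReal_eq_zero.mp h) (not_le.mpr hs)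
    have hzero : (∫⁻ t in Ioi (0 : ℝ),
        ENNReal.ofReal (t ^ (-P / 2)) *
          (∫⁻ s in Ioc (0 : ℝ) t, ENNReal.ofReal (g s ^ q)) ^ r) = 0 := by
      rw [← lintegral_zero (μ := volume.restrict (Ioi (0:ℝ)))]
      refine setLIntegral_congr_fun measurableSet_Ioi (fun t ht => ?_)
      have hin : (∫⁻ s in Ioc (0:ℝ) t, ENNReal.ofReal (g s ^ q)) = 0 := by
        rw [← lintegral_zero (μ := volume.restrict (Ioc (0:ℝ) t))]
        refine setLIntegral_congr_fun measurableSet_Ioc (fun s hs => ?_)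
        rw [hg0 s hs.1, Real.zero_rpow hq_pos.ne', ENNReal.ofReal_zero]
      rw [hin, ENNReal.zero_rpow_of_pos hr_pos, mul_zero]
    rw [hzero, ENNReal.zero_rpow_of_pos (by positivity)]
    exact bot_le
  by_cases hItop : I = ⊤
  · have h4 : ENNReal.ofReal ((c₁ * c₂) ^ (1/P)) * I ^ (1/p) = ⊤ := by
      rw [hItop, ENNReal.top_rpow_of_pos (by positivity), ENNReal.mul_top]
      exact (ENNReal.ofReal_pos.mpr (Real.rpow_pos_of_pos (mul_pos hc₁_pos hc₂_pos) _)).ne'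
    rw [h4]
    exact le_top
  -- main case
  set K : ℝ → ℝ≥0∞ := fun t => ∫⁻ s in Ioc (0:ℝ) t, ENNReal.ofReal (g s ^ P * s ^ (a*r))
    with hK_def
  have hmeas_h : Measurable fun s : ℝ => ENNReal.ofReal (g s ^ P * s ^ (a*r)) := by fun_prop
  have hmeas_w : Measurable fun t : ℝ => ENNReal.ofReal (t ^ β) := by fun_prop
  -- pointwise Hölder bound for the outer integrand
  have hkey : ∀ t ∈ Ioi (0:ℝ),
      ENNReal.ofReal (t ^ (-P / 2)) *
        (∫⁻ s in Ioc (0:ℝ) t, ENNReal.ofReal (g s ^ q)) ^ r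
      ≤ ENNReal.ofReal c₁ * (ENNReal.ofReal (t ^ β) * K t) := by
    intro t ht
    rw [mem_Ioi] at ht
    have hsplit : (∫⁻ s in Ioc (0:ℝ) t, ENNReal.ofReal (g s ^ q))
        = ∫⁻ s in Ioc (0:ℝ) t,
            ENNReal.ofReal (g s ^ q * s ^ a) * ENNReal.ofReal (s ^ (-a)) := by
      refine setLIntegral_congr_fun measurableSet_Ioc (fun s hs => ?_)
      rw [← ENNReal.ofReal_mul
        (mul_nonneg (Real.rpow_nonneg (hg_nonneg s hs.1) q) (Real.rpow_nonneg hs.1.le a)),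
        mul_assoc, ← Real.rpow_add hs.1, add_neg_cancel, Real.rpow_zero, mul_one]
    have hfac1 : (∫⁻ s in Ioc (0:ℝ) t, (ENNReal.ofReal (g s ^ q * s ^ a)) ^ r) = K t := by
      refine setLIntegral_congr_fun measurableSet_Ioc (fun s hs => ?_)
      have hgs := hg_nonneg s hs.1
      rw [ENNReal.ofReal_rpow_of_nonneg
          (mul_nonneg (Real.rpow_nonneg hgs q) (Real.rpow_nonneg hs.1.le a)) hr_pos.le,
        Real.mul_rpow (Real.rpow_nonneg hgs q) (Real.rpow_nonneg hs.1.le a),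
        ← Real.rpow_mul hgs, ← Real.rpow_mul hs.1.le, hqr]
    have hfac2 : (∫⁻ s in Ioc (0:ℝ) t, (ENNReal.ofReal (s ^ (-a))) ^ r')
        = ENNReal.ofReal (t ^ (1 - a*r') / (1 - a*r')) := by
      have heq : ∀ s ∈ Ioc (0:ℝ) t,
          (ENNReal.ofReal (s ^ (-a))) ^ r' = ENNReal.ofReal (s ^ (-(a*r'))) := by
        intro s hs
        rw [ENNReal.ofReal_rpow_of_nonneg (Real.rpow_nonneg hs.1.le _) hr'_pos.le,
          ← Real.rpow_mul hs.1.le, neg_mul]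
      rw [setLIntegral_congr_fun measurableSet_Ioc heq,
        lint_Ioc_rpow (by linarith) ht]
      congr 2
      · ring
      · ring
    have hholder : (∫⁻ s in Ioc (0:ℝ) t, ENNReal.ofReal (g s ^ q))
        ≤ (K t) ^ (1/r) * (ENNReal.ofReal (t ^ (1 - a*r') / (1 - a*r'))) ^ (1/r') := by
      have hmf : Measurable fun s : ℝ => ENNReal.ofReal (g s ^ q * s ^ a) := by fun_prop
      have hmg : Measurable fun s : ℝ => ENNReal.ofReal (s ^ (-a)) := by fun_prop
      have H := ENNReal.lintegral_mul_le_Lp_mul_Lq (volume.restrict (Ioc (0:ℝ) t)) hconj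
        (f := fun s => ENNReal.ofReal (g s ^ q * s ^ a))
        (g := fun s => ENNReal.ofReal (s ^ (-a)))
        hmf.aemeasurable hmg.aemeasurable
      simp only [Pi.mul_apply] at H
      rw [hfac1, hfac2] at H
      rw [hsplit]
      exact H
    have hstep2 : (∫⁻ s in Ioc (0:ℝ) t, ENNReal.ofReal (g s ^ q)) ^ r
        ≤ K t * ENNReal.ofReal (c₁ * t ^ (r - 1 - a*r)) := by
      have h2 := ENNReal.rpow_le_rpow hholder hr_pos.le
      calc (∫⁻ s in Ioc (0:ℝ) t, ENNReal.ofReal (g s ^ q)) ^ r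
          ≤ ((K t) ^ (1/r) * (ENNReal.ofReal (t ^ (1 - a*r') / (1 - a*r'))) ^ (1/r')) ^ r := h2
        _ = K t * ENNReal.ofReal (c₁ * t ^ (r - 1 - a*r)) := by
            rw [ENNReal.mul_rpow_of_nonneg _ _ hr_pos.le, ← ENNReal.rpow_mul,
              ← ENNReal.rpow_mul, one_div_mul_cancel hr_pos.ne', ENNReal.rpow_one, h1r'r]
            congr 1
            rw [ENNReal.ofReal_rpow_of_nonneg
                (div_nonneg (Real.rpow_nonneg ht.le _) h1ar'.le) (by linarith),
              Real.div_rpow (Real.rpow_nonneg ht.le _) h1ar'.le,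
              ← Real.rpow_mul ht.le, hur, div_eq_mul_inv, ← Real.inv_rpow h1ar'.le,
              mul_comm]
    calc ENNReal.ofReal (t ^ (-P / 2)) *
          (∫⁻ s in Ioc (0:ℝ) t, ENNReal.ofReal (g s ^ q)) ^ r
        ≤ ENNReal.ofReal (t ^ (-P / 2)) * (K t * ENNReal.ofReal (c₁ * t ^ (r - 1 - a*r))) :=
          mul_le_mul_right hstep2 _
      _ = ENNReal.ofReal c₁ * (ENNReal.ofReal (t ^ β) * K t) := by
          have hponent : t ^ (-P/2) * t ^ (r - 1 - a*r) = t ^ β := by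
            rw [← Real.rpow_add ht]; congr 1; rw [hβ_def]; ring
          rw [ENNReal.ofReal_mul hc₁_pos.le]
          have hshuffle : ∀ x y z w : ℝ≥0∞, x * (y * (z * w)) = z * ((x * w) * y) := by
            intro x y z w; ring
          rw [hshuffle, ← ENNReal.ofReal_mul (Real.rpow_nonneg ht.le _), hponent]
  -- step 6 pointwise bound
  have hstep6 : ∀ s ∈ Ioi (0:ℝ),
      ENNReal.ofReal (g s ^ P * s ^ (a*r)) * ENNReal.ofReal (s ^ (β+1) * c₂)
        ≤ (ENNReal.ofReal c₂ * I ^ m) * ENNReal.ofReal (g s ^ p) := by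
    intro s hs
    rw [mem_Ioi] at hs
    have hg0 := hg_nonneg s hs
    have e0 : g s ^ P = g s ^ (P - p) * g s ^ p := by
      rw [← Real.rpow_add_of_nonneg hg0 (by linarith) hp_pos.le, sub_add_cancel]
    have e0' : s ^ (a*r) * s ^ (β+1) = s ^ m := by
      rw [← Real.rpow_add hs, hexp]
    have e1 : g s ^ P * s ^ (a*r) * (s ^ (β+1) * c₂)
        = c₂ * ((g s ^ (P - p) * s ^ m) * g s ^ p) := by
      rw [e0]
      linear_combination (g s ^ (P - p) * g s ^ p * c₂) * e0'
    have hbd : ENNReal.ofReal (g s ^ (P - p) * s ^ m) ≤ I ^ m := by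
      have h5 : ENNReal.ofReal (g s ^ (P - p) * s ^ m)
          = (ENNReal.ofReal (g s ^ p) * ENNReal.ofReal s) ^ m := by
        rw [ENNReal.mul_rpow_of_nonneg _ _ hm_pos.le,
          ENNReal.ofReal_rpow_of_nonneg (Real.rpow_nonneg hg0 p) hm_pos.le,
          ENNReal.ofReal_rpow_of_nonneg hs.le hm_pos.le,
          ← Real.rpow_mul hg0, hpm,
          ← ENNReal.ofReal_mul (Real.rpow_nonneg hg0 _)]
      rw [h5]
      exact ENNReal.rpow_le_rpow (hpt s hs) hm_pos.le
    calc ENNReal.ofReal (g s ^ P * s ^ (a*r)) * ENNReal.ofReal (s ^ (β+1) * c₂)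
        = ENNReal.ofReal c₂ *
            (ENNReal.ofReal (g s ^ (P - p) * s ^ m) * ENNReal.ofReal (g s ^ p)) := by
          rw [← ENNReal.ofReal_mul
            (mul_nonneg (Real.rpow_nonneg hg0 _) (Real.rpow_nonneg hs.le _)), e1,
            ENNReal.ofReal_mul hc₂_pos.le,
            ENNReal.ofReal_mul
              (mul_nonneg (Real.rpow_nonneg hg0 _) (Real.rpow_nonneg hs.le _))]
      _ ≤ ENNReal.ofReal c₂ * (I ^ m * ENNReal.ofReal (g s ^ p)) := by
          exact mul_le_mul_right (mul_le_mul_left hbd _) _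
      _ = (ENNReal.ofReal c₂ * I ^ m) * ENNReal.ofReal (g s ^ p) := by rw [mul_assoc]
  -- main estimate
  have hImtop : I ^ m ≠ ⊤ := ENNReal.rpow_ne_top_of_nonneg hm_pos.le hItop
  have hJ : (∫⁻ t in Ioi (0 : ℝ),
      ENNReal.ofReal (t ^ (-P / 2)) *
        (∫⁻ s in Ioc (0 : ℝ) t, ENNReal.ofReal (g s ^ q)) ^ r)
      ≤ ENNReal.ofReal c₁ * (ENNReal.ofReal c₂ * I ^ (P/p)) := by
    calc (∫⁻ t in Ioi (0 : ℝ), ENNReal.ofReal (t ^ (-P / 2)) *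
            (∫⁻ s in Ioc (0 : ℝ) t, ENNReal.ofReal (g s ^ q)) ^ r)
        ≤ ∫⁻ t in Ioi (0:ℝ), ENNReal.ofReal c₁ * (ENNReal.ofReal (t ^ β) * K t) :=
          setLIntegral_mono' measurableSet_Ioi hkey
      _ = ENNReal.ofReal c₁ * ∫⁻ t in Ioi (0:ℝ), ENNReal.ofReal (t ^ β) * K t :=
          lintegral_const_mul' _ _ ENNReal.ofReal_ne_top
      _ = ENNReal.ofReal c₁ * ∫⁻ s in Ioi (0:ℝ),
            ENNReal.ofReal (g s ^ P * s ^ (a*r)) * ∫⁻ t' in Ici s, ENNReal.ofReal (t' ^ β) := by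
          rw [swap_aux _ _ hmeas_w hmeas_h]
      _ = ENNReal.ofReal c₁ * ∫⁻ s in Ioi (0:ℝ),
            ENNReal.ofReal (g s ^ P * s ^ (a*r)) * ENNReal.ofReal (s ^ (β+1) * c₂) := by
          congr 1
          refine setLIntegral_congr_fun measurableSet_Ioi (fun s hs => ?_)
          rw [mem_Ioi] at hs
          rw [lint_Ici_rpow hβ_lt hs, hc₂_def]
      _ ≤ ENNReal.ofReal c₁ * ∫⁻ s in Ioi (0:ℝ),
            (ENNReal.ofReal c₂ * I ^ m) * ENNReal.ofReal (g s ^ p) :=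
          mul_le_mul_right (setLIntegral_mono' measurableSet_Ioi hstep6) _
      _ = ENNReal.ofReal c₁ * ((ENNReal.ofReal c₂ * I ^ m) * I) := by
          rw [lintegral_const_mul' _ _ (ENNReal.mul_ne_top ENNReal.ofReal_ne_top hImtop)]
      _ = ENNReal.ofReal c₁ * (ENNReal.ofReal c₂ * I ^ (P/p)) := by
          have h6 : I ^ (P/p) = I ^ m * I := by
            rw [show P/p = m + 1 by rw [hm_def]; field_simp; ring,
              ENNReal.rpow_add m 1 hI0 hItop, ENNReal.rpow_one]
          rw [h6, mul_assoc]
  -- conclude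
  calc (∫⁻ t in Ioi (0 : ℝ),
        ENNReal.ofReal (t ^ (-P / 2)) *
          (∫⁻ s in Ioc (0 : ℝ) t, ENNReal.ofReal (g s ^ q)) ^ r) ^ (1/P)
      ≤ (ENNReal.ofReal c₁ * (ENNReal.ofReal c₂ * I ^ (P/p))) ^ (1/P) :=
        ENNReal.rpow_le_rpow hJ (by positivity)
    _ = ENNReal.ofReal ((c₁ * c₂) ^ (1/P)) * I ^ (1/p) := by
        rw [← mul_assoc, ← ENNReal.ofReal_mul hc₁_pos.le,
          ENNReal.mul_rpow_of_nonneg _ _ (by positivity : (0:ℝ) ≤ 1/P),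
          ENNReal.ofReal_rpow_of_nonneg (mul_pos hc₁_pos hc₂_pos).le (by positivity),
          ← ENNReal.rpow_mul,
          show P/p * (1/P) = 1/p by field_simp]
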